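/- Let a, b ∈ ℝ² be linearly independent vectors and let α, β ∈ ℝ be arbitrary real scalars. Then the set { (α‖x‖² + ⟨a,x⟩, β‖x‖² + ⟨b,x⟩) : x ∈ ℝ², ‖x‖ ≤ 1 } is a convex subset of ℝ². -/

import Mathlib

/-!
Since `a, b` are independent there is `w` with `⟪a, w⟫ = α` and `⟪b, w⟫ = β`, and the set is the
image of `{‖x‖² • w + x : ‖x‖ ≤ 1}` under the linear map `x ↦ (⟪a, x⟫, ⟪b, x⟫)`. An intermediate
value argument shows that this set equals `{x + ρ • w : ‖x‖² ≤ ρ ≤ 1}`, the linear image of the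
epigraph of the convex function `‖·‖²` cut off at height `1`.
-/

open scoped RealInnerProductSpace
open Set Metric

theorem exists_inner_eq_of_linearIndependent {E ι : Type*} [NormedAddCommGroup E]
    [InnerProductSpace ℝ E] [Finite ι] {v : ι → E} (hv : LinearIndependent ℝ v) (c : ι → ℝ) :
    ∃ w : E, ∀ i, ⟪v i, w⟫ = c i := by
  let U := Submodule.span ℝ (range v)
  have : FiniteDimensional ℝ U := FiniteDimensional.span_of_finite ℝ (finite_range v)
  let B := Module.Basis.span hv
  refine ⟨(InnerProductSpace.toDual ℝ U).symm (B.constr ℝ c).toContinuousLinearMap, fun i => ?_⟩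
  have hvi : v i = B i := by simp [B]
  rw [real_inner_comm, hvi, ← Submodule.coe_inner, InnerProductSpace.toDual_symm_apply]
  simp

section NormedSpace

variable {E : Type*} [NormedAddCommGroup E] [NormedSpace ℝ E]

theorem convex_norm_sq_le_snd_le_one : Convex ℝ {p : E × ℝ | ‖p.1‖ ^ 2 ≤ p.2 ∧ p.2 ≤ 1} := by
  have hsq : ConvexOn ℝ univ fun x : E => ‖x‖ ^ 2 :=
    convexOn_univ_norm.pow (fun x _ => norm_nonneg x) 2
  convert hsq.convex_epigraph.inter (convex_halfSpace_le (LinearMap.snd ℝ E ℝ).isLinear 1)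
    using 1
  ext p
  simp

theorem exists_norm_sq_smul_add_eq (x w : E) {ρ : ℝ} (hρ : ‖x‖ ^ 2 ≤ ρ) :
    ∃ z : E, ‖z‖ ^ 2 ≤ ρ ∧ ‖z‖ ^ 2 • w + z = x + ρ • w := by
  set g : ℝ → ℝ := fun s => ‖x + (ρ - s) • w‖ ^ 2 - s
  have hρ₀ : 0 ≤ ρ := (sq_nonneg _).trans hρ
  have hg : ContinuousOn g (Icc 0 ρ) := by fun_prop
  have hzero : (0 : ℝ) ∈ Icc (g ρ) (g 0) :=
    ⟨by simpa [g] using hρ, by simp only [g, sub_zero]; positivity⟩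
  obtain ⟨s, hs, hgs⟩ := intermediate_value_Icc' hρ₀ hg hzero
  have hnorm : ‖x + (ρ - s) • w‖ ^ 2 = s := sub_eq_zero.mp hgs
  refine ⟨x + (ρ - s) • w, hnorm.trans_le hs.2, ?_⟩
  rw [hnorm]
  module

theorem image_norm_sq_smul_add_closedBall (w : E) :
    (fun x => ‖x‖ ^ 2 • w + x) '' closedBall 0 1 =
      (fun p : E × ℝ => p.1 + p.2 • w) '' {p | ‖p.1‖ ^ 2 ≤ p.2 ∧ p.2 ≤ 1} := by
  apply Subset.antisymm
  · rintro _ ⟨x, hx, rfl⟩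
    rw [mem_closedBall_zero_iff] at hx
    exact ⟨(x, ‖x‖ ^ 2), ⟨le_rfl, pow_le_one₀ (norm_nonneg x) hx⟩, add_comm _ _⟩
  · rintro _ ⟨⟨x, ρ⟩, ⟨hx, hρ⟩, rfl⟩
    obtain ⟨z, hz, hzx⟩ := exists_norm_sq_smul_add_eq x w hx
    refine ⟨z, ?_, hzx⟩
    rw [mem_closedBall_zero_iff, ← sq_le_one_iff₀ (norm_nonneg z)]
    exact hz.trans hρ

theorem convex_image_norm_sq_smul_add_closedBall (w : E) :
    Convex ℝ ((fun x => ‖x‖ ^ 2 • w + x) '' closedBall 0 1) := by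
  rw [image_norm_sq_smul_add_closedBall]
  exact convex_norm_sq_le_snd_le_one.linear_image
    (LinearMap.fst ℝ E ℝ + (LinearMap.snd ℝ E ℝ).smulRight w)

end NormedSpace

theorem stmt0 (a b : EuclideanSpace ℝ (Fin 2)) (hab : LinearIndependent ℝ ![a, b])
    (α β : ℝ) :
    Convex ℝ {p : ℝ × ℝ | ∃ x : EuclideanSpace ℝ (Fin 2), ‖x‖ ≤ 1 ∧
      p = (α * ‖x‖ ^ 2 + ⟪a, x⟫, β * ‖x‖ ^ 2 + ⟪b, x⟫)} := by
  obtain ⟨w, hw⟩ := exists_inner_eq_of_linearIndependent hab ![α, β]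
  have hwa : ⟪a, w⟫ = α := hw 0
  have hwb : ⟪b, w⟫ = β := hw 1
  have hL := (convex_image_norm_sq_smul_add_closedBall w).linear_image
    ((innerₛₗ ℝ a).prod (innerₛₗ ℝ b))
  convert hL using 1
  -- the `SMul ℝ (ℝ × ℝ)` instances of the two sides agree only up to unfolding
  · rfl
  ext p
  simp [image_image, inner_add_right, real_inner_smul_right, hwa, hwb, eq_comm, mul_comm]
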